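/- For every integer p ≥ 2, the polynomial u(τ) = (1−τ)^{p+2}(1+τ)^{p−2} satisfies the homogeneous Bianchi transport equation in the sector q = p for the component a₀, i.e. (1−τ²)·u''(τ) + (4 + 2(p−1)τ)·u'(τ) + 2p·u(τ) = 0 for all real τ. -/

import Mathlib

/-!
The function `u(t) = (1 - t)^m (1 + t)^n` has logarithmic derivative `n/(1 + t) - m/(1 - t)`, so it
solves the first-order equation `(1 - t²) u' = (n(1 - t) - m(1 + t)) u`. Differentiating this
identity once gives `(1 - t²) u'' + (m - n + (m + n - 2) t) u' + (m + n) u = 0`, and for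
`m = p + 2`, `n = p - 2` the coefficients are `4 + 2(p - 1) t` and `2p`.
-/

open Filter Topology

theorem mul_deriv_deriv_of_mul_deriv_eventuallyEq {P Q f : ℝ → ℝ} {P' Q' t : ℝ}
    (hP : HasDerivAt P P' t) (hQ : HasDerivAt Q Q' t) (hf : DifferentiableAt ℝ f t)
    (hf' : DifferentiableAt ℝ (deriv f) t)
    (h : (fun s => P s * deriv f s) =ᶠ[𝓝 t] fun s => Q s * f s) :
    P t * deriv (deriv f) t + (P' - Q t) * deriv f t - Q' * f t = 0 := by
  have hL := hP.mul hf'.hasDerivAt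
  have hR := (hQ.mul hf.hasDerivAt).congr_of_eventuallyEq h
  linear_combination hL.unique hR

theorem natCast_mul_pow_sub_one_mul {R : Type*} [Semiring R] (n : ℕ) (x : R) :
    (n : R) * x ^ (n - 1) * x = n * x ^ n := by
  rcases n with _ | n <;> simp [pow_succ, mul_assoc]

theorem one_sub_sq_mul_deriv_one_sub_pow_mul_one_add_pow (m n : ℕ) (t : ℝ) :
    (1 - t ^ 2) * deriv (fun s : ℝ => (1 - s) ^ m * (1 + s) ^ n) t
      = (n * (1 - t) - m * (1 + t)) * ((1 - t) ^ m * (1 + t) ^ n) := by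
  have h := (((hasDerivAt_id t).const_sub 1).fun_pow m).fun_mul
    (((hasDerivAt_id t).const_add 1).fun_pow n)
  simp only [id_eq] at h
  rw [h.deriv]
  linear_combination (1 - t) * (1 - t) ^ m * natCast_mul_pow_sub_one_mul n (1 + t)
    - (1 + t) * (1 + t) ^ n * natCast_mul_pow_sub_one_mul m (1 - t)

theorem one_sub_pow_mul_one_add_pow_ode (m n : ℕ) (t : ℝ) :
    (1 - t ^ 2) * deriv (deriv fun s : ℝ => (1 - s) ^ m * (1 + s) ^ n) t
      + (m - n + (m + n - 2) * t) * deriv (fun s : ℝ => (1 - s) ^ m * (1 + s) ^ n) t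
      + (m + n) * ((1 - t) ^ m * (1 + t) ^ n) = 0 := by
  have hu : ContDiff ℝ 2 fun s : ℝ => (1 - s) ^ m * (1 + s) ^ n := by fun_prop
  have hP : HasDerivAt (fun s : ℝ => 1 - s ^ 2) (-2 * t) t := by
    simpa using ((hasDerivAt_id t).pow 2).const_sub 1
  have hQ : HasDerivAt (fun s : ℝ => n * (1 - s) - m * (1 + s)) (-n - m) t := by
    simpa using (((hasDerivAt_id t).const_sub 1).const_mul (n : ℝ)).fun_sub
      (((hasDerivAt_id t).const_add 1).const_mul (m : ℝ))
  have h := mul_deriv_deriv_of_mul_deriv_eventuallyEq hP hQ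
    (hu.differentiable two_ne_zero t) (hu.differentiable_deriv_two t)
    (.of_forall (one_sub_sq_mul_deriv_one_sub_pow_mul_one_add_pow m n))
  linear_combination h

theorem stmt_0 (p : ℕ) (hp : 2 ≤ p) :
    ∀ τ : ℝ,
      (1 - τ ^ 2) * deriv (deriv (fun t : ℝ => (1 - t) ^ (p + 2) * (1 + t) ^ (p - 2))) τ
        + (4 + 2 * ((p : ℝ) - 1) * τ) *
            deriv (fun t : ℝ => (1 - t) ^ (p + 2) * (1 + t) ^ (p - 2)) τ
        + 2 * (p : ℝ) * ((1 - τ) ^ (p + 2) * (1 + τ) ^ (p - 2)) = 0 := by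
  intro τ
  have h := one_sub_pow_mul_one_add_pow_ode (p + 2) (p - 2) τ
  push_cast [Nat.cast_sub hp] at h
  linear_combination h
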